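/- arXiv:2109.02142 — 4 statements merged into one kernel-verified Lean document; each statement's English description precedes it below -/
import Mathlib

section
/- Let G be a finite simple connected graph with vertex ordering α = (v_1, …, v_n) that is a strong elimination ordering. Let v_j be the highest-index neighbor of v_i and suppose i < j. Then N_i^2[v_i] ⊆ N_i[v_j]; that is, every vertex v_t with t ≥ i and d_G(v_i, v_t) ≤ 2 is adjacent to or equal to v_j and satisfies v_t ∈ N_i[v_j]. -/
variable {n : ℕ}

/-- `N_i[v]`: the part of the closed neighbourhood of `v` consisting of vertices
of index at least `i` (vertices are identified with their indices in the ordering). -/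
def NclGE (G : SimpleGraph (Fin n)) (i v : Fin n) : Set (Fin n) :=
  {u : Fin n | (u = v ∨ G.Adj v u) ∧ i ≤ u}

/-- The identity ordering `(v_1, …, v_n)` of `Fin n` is a strong elimination ordering of `G`:
for all `i ≤ j ≤ k`, if `v_j, v_k ∈ N_i[v_i]` then `N_i[v_j] ⊆ N_i[v_k]`. -/
def IsSEO (G : SimpleGraph (Fin n)) : Prop :=
  ∀ i j k : Fin n, i ≤ j → j ≤ k → j ∈ NclGE G i i → k ∈ NclGE G i i →
    NclGE G i j ⊆ NclGE G i k

/-- `N_i^2[v]`: the vertices of index at least `i` within distance two of `v`. -/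
def N2GE (G : SimpleGraph (Fin n)) (i v : Fin n) : Set (Fin n) :=
  {u : Fin n | i ≤ u ∧ G.dist v u ≤ 2}

/-!
If the middle vertex `v_w` of a shortest `v_i`–`v_t` path has index at least `i`, then
`v_t ∈ N_i[v_w] ⊆ N_i[v_j]` by the SEO property at `i`, since `w ≤ j`. Otherwise `w < i`, and the
SEO property at `w` applied to `i ≤ t` gives `N_w[v_i] ⊆ N_w[v_t]`, so `v_j ∈ N_w[v_t]`.
-/

theorem SimpleGraph.Reachable.exists_adj_or_eq_of_dist_le_two {V : Type*} {G : SimpleGraph V}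
    {u v : V} (huv : G.Reachable u v) (hdist : G.dist u v ≤ 2) :
    ∃ w, (w = u ∨ G.Adj u w) ∧ (v = w ∨ G.Adj w v) := by
  obtain ⟨p, hp⟩ := huv.exists_walk_length_eq_dist
  match p, hp with
  | .nil, _ => exact ⟨u, Or.inl rfl, Or.inl rfl⟩
  | .cons h .nil, _ => exact ⟨v, Or.inr h, Or.inl rfl⟩
  | .cons h (.cons h' .nil), _ => exact ⟨_, Or.inr h, Or.inr h'⟩
  | .cons _ (.cons _ (.cons _ _)), hp => simp at hp; omega

namespace IsSEO

variable {G : SimpleGraph (Fin n)}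

theorem nclGE_subset_of_highest (hSEO : IsSEO G) {i j w : Fin n} (hadj : G.Adj i j) (hij : i ≤ j)
    (hjmax : ∀ l : Fin n, G.Adj i l → l ≤ j) (hw : w ∈ NclGE G i i) :
    NclGE G i w ⊆ NclGE G i j :=
  hSEO i w j hw.2 (hw.1.elim (fun h => h ▸ hij) (hjmax w)) hw ⟨Or.inr hadj, hij⟩

theorem eq_or_adj_of_adj_of_lt (hSEO : IsSEO G) {w i j u : Fin n} (hwi : w < i) (hiu : i ≤ u)
    (hadj_wi : G.Adj w i) (hadj_wu : G.Adj w u) (hadj_ij : G.Adj i j) (hij : i ≤ j) :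
    u = j ∨ G.Adj j u :=
  have hj : j ∈ NclGE G w i := ⟨Or.inr hadj_ij, hwi.le.trans hij⟩
  (hSEO w i u hwi.le hiu ⟨Or.inr hadj_wi, hwi.le⟩ ⟨Or.inr hadj_wu, hwi.le.trans hiu⟩ hj).1.imp
    Eq.symm G.adj_symm

end IsSEO

theorem seo_dist_two_subset_nbhd_of_highest (G : SimpleGraph (Fin n))
    (hconn : G.Connected) (hSEO : IsSEO G)
    (i j : Fin n) (hij : i < j) (hadj : G.Adj i j)
    (hjmax : ∀ l : Fin n, G.Adj i l → l ≤ j) :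
    N2GE G i i ⊆ NclGE G i j := by
  rintro u ⟨hiu, hdist⟩
  obtain ⟨w, hiw, hwu⟩ := (hconn i u).exists_adj_or_eq_of_dist_le_two hdist
  rcases le_or_gt i w with hle | hlt
  · exact hSEO.nclGE_subset_of_highest hadj hij.le hjmax ⟨hiw, hle⟩ ⟨hwu, hiu⟩
  · have hiw : G.Adj i w := hiw.resolve_left hlt.ne
    have hwu : G.Adj w u := hwu.resolve_left (hlt.trans_le hiu).ne'
    exact ⟨hSEO.eq_or_adj_of_adj_of_lt hlt hiu hiw.symm hwu hadj hij.le, hiu⟩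
end

section
/- Let G be a finite simple connected graph with vertex ordering α = (v_1, …, v_n) that is a strong elimination ordering. If v_i v_j ∈ E(G) with i < j, then N_i^2[v_i] ⊆ N_i^2[v_j]; that is, every vertex v_t with t ≥ i and d_G(v_i, v_t) ≤ 2 also satisfies d_G(v_j, v_t) ≤ 2. -/
variable {n : ℕ}

/-!
Every vertex `t ≥ i` within distance two of `i` is reached through a closed neighbour `w` of `i`.
If `w ≥ i`, the strong elimination property at level `i` compares `N_i[w]` and `N_i[j]`: either
`t ∈ N_i[j]`, or `j ∈ N_i[w]` and `w` is a common closed neighbour of `j` and `t`. If `w < i`, the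
property at level `w` gives `N_w[i] ⊆ N_w[t]`, so `j` and `t` are adjacent or equal.
-/

namespace SimpleGraph

variable {V : Type*} {G : SimpleGraph V} {a b w : V}

lemma dist_le_two_of_adj_or_eq (ha : w = a ∨ G.Adj a w) (hb : b = w ∨ G.Adj w b) :
    G.dist a b ≤ 2 := by
  rcases ha with rfl | ha <;> rcases hb with rfl | hb
  · simp
  · exact (dist_le hb.toWalk).trans (by simp)
  · exact (dist_le ha.toWalk).trans (by simp)
  · exact (dist_le (.cons ha hb.toWalk)).trans (by simp)

lemma Reachable.exists_adj_or_eq_of_dist_le_two_s5 (hr : G.Reachable a b) (h : G.dist a b ≤ 2) :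
    ∃ w, (w = a ∨ G.Adj a w) ∧ (b = w ∨ G.Adj w b) := by
  obtain ⟨p, hp⟩ := hr.exists_walk_length_eq_dist
  rw [← hp] at h
  match p, h with
  | .nil, _ => exact ⟨a, .inl rfl, .inl rfl⟩
  | .cons hab .nil, _ => exact ⟨b, .inr hab, .inl rfl⟩
  | .cons haw (.cons hwb .nil), _ => exact ⟨_, .inr haw, .inr hwb⟩
  | .cons _ (.cons _ (.cons _ _)), h => simp at h

end SimpleGraph

lemma IsSEO.exists_common_adj_or_eq_of_mem_nclGE {G : SimpleGraph (Fin n)} (hSEO : IsSEO G)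
    {i j w t : Fin n} (hj : j ∈ NclGE G i i) (hw : w ∈ NclGE G i i) (ht : t ∈ NclGE G i w) :
    ∃ x, (x = j ∨ G.Adj j x) ∧ (t = x ∨ G.Adj x t) := by
  rcases le_total w j with hwj | hjw
  · exact ⟨j, .inl rfl, (hSEO i w j hw.2 hwj hw hj ht).1⟩
  · have hjw' : j = w ∨ G.Adj w j := (hSEO i j w hj.2 hjw hj hw ⟨.inl rfl, hj.2⟩).1
    exact ⟨w, hjw'.imp Eq.symm SimpleGraph.Adj.symm, ht.1⟩

lemma IsSEO.exists_common_adj_or_eq {G : SimpleGraph (Fin n)} (hSEO : IsSEO G) {i j w t : Fin n}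
    (hij : i ≤ j) (hadj : G.Adj i j) (hit : i ≤ t) (hw : w = i ∨ G.Adj i w)
    (ht : t = w ∨ G.Adj w t) :
    ∃ x, (x = j ∨ G.Adj j x) ∧ (t = x ∨ G.Adj x t) := by
  rcases le_or_gt i w with hiw | hwi
  · exact hSEO.exists_common_adj_or_eq_of_mem_nclGE ⟨.inr hadj, hij⟩ ⟨hw, hiw⟩ ⟨ht, hit⟩
  · have hwi_adj : G.Adj w i := (hw.resolve_left hwi.ne).symm
    have hwt_adj : G.Adj w t := ht.resolve_left (hwi.trans_le hit).ne'
    have hjt := hSEO w i t hwi.le hit ⟨.inr hwi_adj, hwi.le⟩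
      ⟨.inr hwt_adj, (hwi.trans_le hit).le⟩ ⟨.inr hadj, (hwi.trans_le hij).le⟩
    exact ⟨j, .inl rfl, hjt.1.imp Eq.symm SimpleGraph.Adj.symm⟩

theorem seo_dist_two_subset_general (G : SimpleGraph (Fin n))
    (hSEO : IsSEO G)
    (i j : Fin n) (hij : i < j) (hadj : G.Adj i j) :
    N2GE G i i ⊆ N2GE G i j := by
  rintro t ⟨hit, hdist⟩
  refine ⟨hit, ?_⟩
  by_cases hr : G.Reachable i t
  · obtain ⟨w, hw, ht⟩ := hr.exists_adj_or_eq_of_dist_le_two_s5 hdist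
    obtain ⟨x, hx, htx⟩ := hSEO.exists_common_adj_or_eq hij.le hadj hit hw ht
    exact SimpleGraph.dist_le_two_of_adj_or_eq hx htx
  · have hjt : ¬G.Reachable j t := fun h ↦ hr (hadj.reachable.trans h)
    simp [SimpleGraph.dist_eq_zero_of_not_reachable hjt]

theorem seo_dist_two_subset (G : SimpleGraph (Fin n))
    (hconn : G.Connected) (hSEO : IsSEO G)
    (i j : Fin n) (hij : i < j) (hadj : G.Adj i j) :
    N2GE G i i ⊆ N2GE G i j :=
  seo_dist_two_subset_general G hSEO i j hij hadj
end

section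
/- Let G be a finite simple connected graph with vertex ordering α = (v_1, …, v_n) that is a strong elimination ordering. Suppose v_i v_j ∈ E(G) with i < j, and let v_k be the highest-index neighbor of v_j. Then N_i^2[v_i] ⊆ N_i^2[v_k]; that is, every vertex v_t with t ≥ i and d_G(v_i, v_t) ≤ 2 also satisfies d_G(v_k, v_t) ≤ 2. -/
/-!
Let `t ≥ i` be joined to `i` by a path `i ~ m ~ t` of length at most two (steps may be trivial).
In an SEO the sets `N_i[v]`, `v ∈ N_i[i]`, are nested along the ordering. If `i ≤ m ≤ j` then
`t ∈ N_i[m] ⊆ N_i[j]`, so `t` is reached from `k` through `j`; if `j ≤ m` then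
`k ∈ N_i[j] ⊆ N_i[m]`, so `t` is reached from `k` through `m`; and if `m < i`, the SEO condition
at `m` gives `j ∈ N_m[i] ⊆ N_m[t]`, so again `t` is reached from `k` through `j`.
-/

variable {n : ℕ}

namespace SimpleGraph

variable {V : Type*} {G : SimpleGraph V}

lemma dist_le_two_of_eq_or_adj {a b c : V} (hab : b = a ∨ G.Adj a b) (hbc : c = b ∨ G.Adj b c) :
    G.dist a c ≤ 2 := by
  rcases hab with rfl | hab <;> rcases hbc with rfl | hbc
  · simp
  · exact (dist_le hbc.toWalk).trans (by simp)
  · exact (dist_le hab.toWalk).trans (by simp)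
  · exact (dist_le (hab.toWalk.append hbc.toWalk)).trans (by simp)

lemma Reachable.exists_eq_or_adj_of_dist_le_two {u v : V} (huv : G.Reachable u v)
    (hdist : G.dist u v ≤ 2) : ∃ m, (m = u ∨ G.Adj u m) ∧ (v = m ∨ G.Adj m v) := by
  obtain ⟨p, hp⟩ := huv.exists_walk_length_eq_dist
  match p, hp with
  | .nil, _ => exact ⟨u, Or.inl rfl, Or.inl rfl⟩
  | .cons h .nil, _ => exact ⟨u, Or.inl rfl, Or.inr h⟩
  | .cons h (.cons h' .nil), _ => exact ⟨_, Or.inr h, Or.inr h'⟩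
  | .cons _ (.cons _ (.cons _ _)), hp => simp only [Walk.length_cons] at hp; omega

end SimpleGraph

open SimpleGraph

namespace IsSEO

variable {G : SimpleGraph (Fin n)}

lemma nclGE_subset_of_le (hG : IsSEO G) {i a b : Fin n} (hab : a ≤ b)
    (ha : a ∈ NclGE G i i) (hb : b ∈ NclGE G i i) : NclGE G i a ⊆ NclGE G i b :=
  hG i a b ha.2 hab ha hb

lemma nclGE_subset_total (hG : IsSEO G) {i a b : Fin n}
    (ha : a ∈ NclGE G i i) (hb : b ∈ NclGE G i i) :
    NclGE G i a ⊆ NclGE G i b ∨ NclGE G i b ⊆ NclGE G i a :=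
  (le_total a b).imp (hG.nclGE_subset_of_le · ha hb) (hG.nclGE_subset_of_le · hb ha)

lemma dist_le_two_of_path {i j k m t : Fin n} (hG : IsSEO G) (hij : i ≤ j) (hadj : G.Adj i j)
    (hjk : G.Adj j k) (hik : i ≤ k) (hit : i ≤ t)
    (him : m = i ∨ G.Adj i m) (hmt : t = m ∨ G.Adj m t) : G.dist k t ≤ 2 := by
  have hkj : j = k ∨ G.Adj k j := Or.inr hjk.symm
  have hj : j ∈ NclGE G i i := ⟨Or.inr hadj, hij⟩
  rcases le_or_gt i m with hm | hm
  · have hm' : m ∈ NclGE G i i := ⟨him, hm⟩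
    rcases hG.nclGE_subset_total hm' hj with hsub | hsub
    · exact dist_le_two_of_eq_or_adj hkj (hsub ⟨hmt, hit⟩).1
    · obtain ⟨hkm, -⟩ := hsub ⟨Or.inr hjk, hik⟩
      exact dist_le_two_of_eq_or_adj (hkm.imp Eq.symm Adj.symm) hmt
  · have him : G.Adj i m := him.resolve_left hm.ne
    have hmt : G.Adj m t := hmt.resolve_left (hm.trans_le hit).ne'
    have hsub : NclGE G m i ⊆ NclGE G m t :=
      hG.nclGE_subset_of_le hit ⟨Or.inr him.symm, hm.le⟩ ⟨Or.inr hmt, (hm.trans_le hit).le⟩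
    obtain ⟨hjt, -⟩ := hsub ⟨Or.inr hadj, hm.le.trans hij⟩
    exact dist_le_two_of_eq_or_adj hkj (hjt.imp Eq.symm Adj.symm)

end IsSEO

theorem seo_dist_two_subset_of_highest_of_neighbor (G : SimpleGraph (Fin n))
    (hconn : G.Connected) (hSEO : IsSEO G)
    (i j k : Fin n) (hij : i < j) (hadj : G.Adj i j)
    (hjk : G.Adj j k) (hkmax : ∀ l : Fin n, G.Adj j l → l ≤ k) :
    N2GE G i i ⊆ N2GE G i k := by
  rintro t ⟨hit, hdist⟩
  obtain ⟨m, him, hmt⟩ := (hconn.preconnected i t).exists_eq_or_adj_of_dist_le_two hdist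
  exact ⟨hit, hSEO.dist_le_two_of_path hij.le hadj hjk (hkmax i hadj.symm) hit him hmt⟩
end

section
/- Let G be a finite simple connected graph with vertex ordering α = (v_1, …, v_n) that is a strong elimination ordering. Let v_j be the highest-index neighbor of v_i with j > i (so v_j ≠ v_i), and let v_k ∈ N_i[v_i] (i.e., v_k = v_i or v_k is a neighbor of v_i with k ≥ i). Then N_i^2[v_k] ⊆ N_i^2[v_j]; that is, every vertex v_r with r ≥ i and d_G(v_k, v_r) ≤ 2 also satisfies d_G(v_j, v_r) ≤ 2. -/
variable {n : ℕ}

/-!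
In an SEO the sets `N_i[v]`, `v ∈ N_i[i]`, form a chain, whose top is `N_i[j]` for the
highest neighbour `j` of `i`. So a vertex `r ≥ i` at distance at most one from `k` lies in
`N_i[j]`, and so does the middle vertex `m` of a path `k - m - r` when `m ≥ i`. When `m < i`,
apply the chain property at level `m` to `k` and `r`: either `N_m[k] ⊆ N_m[r]`, so `r` is
within distance one of `i` and hence within distance two of `j`; or `N_m[r] ⊆ N_m[k]`, so `r`
is within distance one of `k`, the case already treated.
-/

namespace SimpleGraph

lemma Reachable.eq_or_adj_or_exists_adj_adj_of_dist_le_two {V : Type*} {G : SimpleGraph V}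
    {u v : V} (h : G.Reachable u v) (hd : G.dist u v ≤ 2) :
    u = v ∨ G.Adj u v ∨ ∃ w, G.Adj u w ∧ G.Adj w v := by
  have hed : G.edist u v ≤ 2 := by
    rw [← h.coe_dist_eq_edist]
    exact_mod_cast hd
  rcases hed.lt_or_eq with hlt | heq
  · have : G.edist u v ≤ 1 := Order.le_of_lt_succ hlt
    rcases edist_le_one_iff_adj_or_eq.mp this with hadj | rfl
    · exact Or.inr (Or.inl hadj)
    · exact Or.inl rfl
  · obtain ⟨-, -, w, hw⟩ := edist_eq_two_iff.mp heq
    rw [mem_commonNeighbors] at hw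
    exact Or.inr (Or.inr ⟨w, hw.1, hw.2.symm⟩)

end SimpleGraph

lemma dist_le_one_of_mem_nclGE {G : SimpleGraph (Fin n)} {i v u : Fin n}
    (h : u ∈ NclGE G i v) : G.dist v u ≤ 1 := by
  rcases h.1 with rfl | hadj
  · simp
  · exact (SimpleGraph.dist_eq_one_iff_adj.mpr hadj).le

namespace IsSEO

variable {G : SimpleGraph (Fin n)}

lemma nclGE_subset_or_subset (hSEO : IsSEO G) {m a b : Fin n}
    (ha : a ∈ NclGE G m m) (hb : b ∈ NclGE G m m) :
    NclGE G m a ⊆ NclGE G m b ∨ NclGE G m b ⊆ NclGE G m a := by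
  rcases le_total a b with hab | hba
  · exact Or.inl (hSEO m a b ha.2 hab ha hb)
  · exact Or.inr (hSEO m b a hb.2 hba hb ha)

lemma nclGE_subset_nclGE_of_forall_adj_le (hSEO : IsSEO G) {i j k : Fin n} (hij : i ≤ j)
    (hadj : G.Adj i j) (hjmax : ∀ l : Fin n, G.Adj i l → l ≤ j) (hk : k ∈ NclGE G i i) :
    NclGE G i k ⊆ NclGE G i j := by
  have hkj : k ≤ j := by
    rcases hk.1 with rfl | hik
    · exact hij
    · exact hjmax k hik
  exact hSEO i k j hk.2 hkj hk ⟨Or.inr hadj, hij⟩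

end IsSEO

theorem seo_dist_two_nbhd_member_subset (G : SimpleGraph (Fin n))
    (hconn : G.Connected) (hSEO : IsSEO G)
    (i j k : Fin n) (hij : i < j) (hadj : G.Adj i j)
    (hjmax : ∀ l : Fin n, G.Adj i l → l ≤ j)
    (hk : k ∈ NclGE G i i) :
    N2GE G i k ⊆ N2GE G i j := by
  have hsub := hSEO.nclGE_subset_nclGE_of_forall_adj_le hij.le hadj hjmax hk
  have hdist_two : ∀ {m r : Fin n}, G.dist j m ≤ 1 → G.dist m r ≤ 1 → G.dist j r ≤ 2 :=
    fun hjm hmr => hconn.dist_triangle.trans (Nat.add_le_add hjm hmr)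
  rintro r ⟨hir, hkr⟩
  refine ⟨hir, ?_⟩
  have hnear_k : (r = k ∨ G.Adj k r) → G.dist j r ≤ 2 := fun h =>
    (dist_le_one_of_mem_nclGE (hsub ⟨h, hir⟩)).trans one_le_two
  rcases (hconn k r).eq_or_adj_or_exists_adj_adj_of_dist_le_two hkr with
    rfl | hkr | ⟨m, hkm, hmr⟩
  · exact hnear_k (Or.inl rfl)
  · exact hnear_k (Or.inr hkr)
  rcases le_or_gt i m with him | him
  · exact hdist_two (dist_le_one_of_mem_nclGE (hsub ⟨Or.inr hkm, him⟩))
      (SimpleGraph.dist_eq_one_iff_adj.mpr hmr).le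
  have hk_m : k ∈ NclGE G m m := ⟨Or.inr hkm.symm, him.le.trans hk.2⟩
  have hr_m : r ∈ NclGE G m m := ⟨Or.inr hmr, him.le.trans hir⟩
  rcases hSEO.nclGE_subset_or_subset hk_m hr_m with hkr_sub | hrk_sub
  · have hi_k : i ∈ NclGE G m k := ⟨hk.1.imp Eq.symm SimpleGraph.Adj.symm, him.le⟩
    exact hdist_two (SimpleGraph.dist_eq_one_iff_adj.mpr hadj.symm).le
      (G.dist_comm ▸ dist_le_one_of_mem_nclGE (hkr_sub hi_k))
  · exact hnear_k (hrk_sub ⟨Or.inl rfl, hr_m.2⟩).1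
end
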